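/- Let S and hatS be d x d diagonal real matrices whose diagonal entries s_1,...,s_d and hat_s_1,...,hat_s_d are all at least c for some c > 0, and let W be any d x d real matrix. Then ||W hatS^{1/2} - S^{1/2} W||_F <= (1/(2 sqrt(c))) ||W hatS - S W||_F. -/

import Mathlib

open MeasureTheory ProbabilityTheory Matrix Filter
open scoped ENNReal NNReal Topology

noncomputable section

namespace CMDSPaper

/-- Euclidean norm of a vector in `Fin d → ℝ`. -/
def enorm2 {d : ℕ} (v : Fin d → ℝ) : ℝ := Real.sqrt (∑ j, v j ^ 2)

/-- A real random variable is sub-Gaussian. -/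
def SubGaussianRV {α : Type*} [MeasurableSpace α] (μ : Measure α) (X : α → ℝ) : Prop :=
  ∃ K > 0, ∀ t ≥ 0, μ {a | t < |X a|} ≤ ENNReal.ofReal (2 * Real.exp (-(t ^ 2 / K ^ 2)))

/-- A probability distribution on `ℝ^d` is sub-Gaussian if all its one-dimensional
marginals are sub-Gaussian. -/
def SubGaussianMeasure {d : ℕ} (F : Measure (Fin d → ℝ)) : Prop :=
  ∀ u : Fin d → ℝ, SubGaussianRV F fun z => ∑ j, z j * u j

/-- The `n × n` double centering matrix `P = I - (1/n) 1 1ᵀ`. -/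
def cent (n : ℕ) : Matrix (Fin n) (Fin n) ℝ :=
  1 - (n : ℝ)⁻¹ • Matrix.of fun _ _ => (1 : ℝ)

/-- Entrywise square of a matrix. -/
def entsq {n : ℕ} (A : Matrix (Fin n) (Fin n) ℝ) : Matrix (Fin n) (Fin n) ℝ :=
  Matrix.of fun i j => A i j ^ 2

/-- `-(1/2) P M P` applied to an (already squared) dissimilarity matrix `M`. -/
def bmatSq {n : ℕ} (M : Matrix (Fin n) (Fin n) ℝ) : Matrix (Fin n) (Fin n) ℝ :=
  (-(1 / 2) : ℝ) • (cent n * M * cent n)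

/-- Entrywise square root of a diagonal matrix. -/
def dsqrt {d : ℕ} (S : Matrix (Fin d) (Fin d) ℝ) : Matrix (Fin d) (Fin d) ℝ :=
  Matrix.diagonal fun j => Real.sqrt (S j j)

/-- Entrywise inverse square root of a diagonal matrix. -/
def dinvsqrt {d : ℕ} (S : Matrix (Fin d) (Fin d) ℝ) : Matrix (Fin d) (Fin d) ℝ :=
  Matrix.diagonal fun j => (Real.sqrt (S j j))⁻¹

/-- `U`, `S` form a top-`d` eigendecomposition of the symmetric matrix `B`:
there is a full orthonormal eigendecomposition with eigenvalues sorted in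
decreasing order such that `U` consists of the first `d` eigenvector columns
and `S` is the diagonal matrix of the `d` largest eigenvalues. -/
def IsTopdEigen {n d : ℕ} (B : Matrix (Fin n) (Fin n) ℝ)
    (U : Matrix (Fin n) (Fin d) ℝ) (S : Matrix (Fin d) (Fin d) ℝ) : Prop :=
  ∃ (h : d ≤ n) (Q : Matrix (Fin n) (Fin n) ℝ) (lam : Fin n → ℝ),
    Qᵀ * Q = 1 ∧ B = Q * Matrix.diagonal lam * Qᵀ ∧ Antitone lam ∧
    (∀ i j, U i j = Q i (Fin.castLE h j)) ∧
    S = Matrix.diagonal fun j => lam (Fin.castLE h j)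

/-- The standard Gaussian on `ℝ^d`. -/
def stdGaussian (d : ℕ) : Measure (Fin d → ℝ) :=
  Measure.pi fun _ => gaussianReal 0 1

open scoped Classical in
/-- The mean-zero Gaussian measure on `ℝ^d` with covariance matrix `S`
(junk value if `S` is not positive semidefinite). -/
def mvGaussian {d : ℕ} (S : Matrix (Fin d) (Fin d) ℝ) : Measure (Fin d → ℝ) :=
  if h : S.PosSemidef then (stdGaussian d).map
    (h.1.eigenvectorUnitary.1 * Matrix.diagonal (fun i => Real.sqrt (h.1.eigenvalues i)) *
      (star h.1.eigenvectorUnitary : Matrix (Fin d) (Fin d) ℝ)).mulVec else stdGaussian d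

/-- `Φ(α, S)`: the CDF at `α` of the mean-zero Gaussian on `ℝ^d` with covariance `S`. -/
def gaussPhi {d : ℕ} (S : Matrix (Fin d) (Fin d) ℝ) (α : Fin d → ℝ) : ℝ :=
  (mvGaussian S {x | ∀ j, x j ≤ α j}).toReal

/-- Spectral (ℓ₂ operator) norm of a matrix. -/
def specNorm {m n : ℕ} (A : Matrix (Fin m) (Fin n) ℝ) : ℝ :=
  ‖LinearMap.toContinuousLinearMap (Matrix.toEuclideanLin A)‖

/-- Frobenius norm of a matrix. -/
def frobNorm {m n : ℕ} (A : Matrix (Fin m) (Fin n) ℝ) : ℝ :=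
  Real.sqrt (∑ i, ∑ j, A i j ^ 2)

/-- The sub-exponential Orlicz (ψ₁) norm of a real random variable. -/
def psi1Norm {α : Type*} [MeasurableSpace α] (μ : Measure α) (Y : α → ℝ) : ℝ :=
  sInf {t | 0 < t ∧ ∫ a, Real.exp (|Y a| / t) ∂μ ≤ 2}

end CMDSPaper

namespace CMDSPaper

/-!
Both commutators are entrywise multiples of `W`: the `(i, j)` entries are
`W i j * (√ŝ_j - √s_i)` and `W i j * (ŝ_j - s_i)`. Since `√` is `1 / (2√c)`-Lipschitz on
`[c, ∞)`, the bound holds entry by entry, hence for the Frobenius norms.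
-/

/-- `√b - √a = (b - a) / (√b + √a)`, and the denominator is at least `2√c`. -/
theorem abs_sqrt_sub_sqrt_le {c a b : ℝ} (hc : 0 < c) (ha : c ≤ a) (hb : c ≤ b) :
    |√b - √a| ≤ |b - a| / (2 * √c) := by
  have hsum : 2 * √c ≤ √b + √a := by
    linarith [Real.sqrt_le_sqrt ha, Real.sqrt_le_sqrt hb]
  have hfactor : |√b - √a| * (√b + √a) = |b - a| := by
    rw [← abs_of_nonneg (by positivity : 0 ≤ √b + √a), ← abs_mul, mul_comm (√b - √a), ← sq_sub_sq,
      Real.sq_sqrt (hc.le.trans hb), Real.sq_sqrt (hc.le.trans ha)]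
  rw [le_div_iff₀ (by positivity), ← hfactor]
  exact mul_le_mul_of_nonneg_left hsum (abs_nonneg _)

theorem mul_diagonal_sub_diagonal_mul_apply {n R : Type*} [Fintype n] [DecidableEq n]
    [CommRing R] (W : Matrix n n R) (s t : n → R) (i j : n) :
    (W * diagonal t - diagonal s * W) i j = W i j * (t j - s i) := by
  rw [Matrix.sub_apply, mul_diagonal, diagonal_mul]
  ring

theorem dsqrt_diagonal {d : ℕ} (s : Fin d → ℝ) :
    dsqrt (diagonal s) = diagonal fun j => √(s j) := by
  simp only [dsqrt, diagonal_apply_eq]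

theorem frobNorm_le_mul_of_abs_apply_le {m n : ℕ} {A B : Matrix (Fin m) (Fin n) ℝ} {k : ℝ}
    (hk : 0 ≤ k) (h : ∀ i j, |A i j| ≤ k * |B i j|) : frobNorm A ≤ k * frobNorm B := by
  rw [frobNorm, frobNorm, ← Real.sqrt_sq hk, ← Real.sqrt_mul (sq_nonneg k), Finset.mul_sum]
  refine Real.sqrt_le_sqrt (Finset.sum_le_sum fun i _ => ?_)
  rw [Finset.mul_sum]
  refine Finset.sum_le_sum fun j _ => ?_
  rw [← sq_abs, ← sq_abs (B i j), ← mul_pow]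
  exact pow_le_pow_left₀ (abs_nonneg _) (h i j) 2

/-- entrywise square-root Lipschitz bound for diagonal matrices:
`‖W hatS^{1/2} - S^{1/2} W‖_F ≤ (1/(2√c)) ‖W hatS - S W‖_F`. -/
theorem sqrt_commutator_bound {d : ℕ} (c : ℝ) (hc : 0 < c)
    (s shat : Fin d → ℝ) (hs : ∀ j, c ≤ s j) (hshat : ∀ j, c ≤ shat j)
    (S hatS : Matrix (Fin d) (Fin d) ℝ)
    (hS : S = Matrix.diagonal s) (hhatS : hatS = Matrix.diagonal shat)
    (W : Matrix (Fin d) (Fin d) ℝ) :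
    frobNorm (W * dsqrt hatS - dsqrt S * W) ≤
      1 / (2 * Real.sqrt c) * frobNorm (W * hatS - S * W) := by
  subst hS hhatS
  refine frobNorm_le_mul_of_abs_apply_le (by positivity) fun i j => ?_
  rw [dsqrt_diagonal, dsqrt_diagonal, mul_diagonal_sub_diagonal_mul_apply,
    mul_diagonal_sub_diagonal_mul_apply, abs_mul, abs_mul, mul_left_comm, one_div_mul_eq_div]
  exact mul_le_mul_of_nonneg_left (abs_sqrt_sub_sqrt_le hc (hs i) (hshat j)) (abs_nonneg _)

end CMDSPaper
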